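/- Eckart–Young (Frobenius norm, Hermitian PSD case): for a Hermitian PSD matrix R with eigenvalues λ₁ ≥ … ≥ λ_N ≥ 0 and any Hermitian matrix R̂ with rank(R̂) ≤ K, one has ‖R − R̂‖_F² ≥ ∑_{k>K} λ_k², with equality achieved by the spectral truncation R_K = ∑_{k≤K} λ_k u_k u_k^H. -/

import Mathlib

open Matrix Finset Module

local notation "⟪" x ", " y "⟫" => @inner ℂ _ _ x y

private lemma normSum' {N : ℕ} (u : Fin N → Fin N → ℂ)
    (horth : ∀ k l, ∑ i, (starRingEnd ℂ) (u k i) * u l i = if k = l then 1 else 0)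
    (s : Finset (Fin N)) (α : Fin N → ℂ) :
    ∑ r, ‖∑ k ∈ s, α k * u k r‖ ^ 2 = ∑ k ∈ s, ‖α k‖ ^ 2 := by
  have key : ((∑ r, ‖∑ k ∈ s, α k * u k r‖ ^ 2 : ℝ) : ℂ)
      = ∑ k ∈ s, ((‖α k‖ : ℂ)) ^ 2 := by
    push_cast
    have h1 : ∀ z : ℂ, ((‖z‖ : ℂ)) ^ 2 = z * (starRingEnd ℂ) z := by
      intro z
      rw [Complex.mul_conj]
      norm_cast
      rw [Complex.normSq_eq_norm_sq]
    simp_rw [h1, map_sum, _root_.map_mul, Finset.sum_mul_sum]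
    rw [Finset.sum_comm]
    rw [Finset.sum_congr rfl fun k _ => Finset.sum_comm]
    have inner2 : ∀ k l, (∑ r, u k r * (starRingEnd ℂ) (u l r)) = if k = l then 1 else 0 := by
      intro k l
      have := congrArg (starRingEnd ℂ) (horth k l)
      simpa [map_sum, apply_ite, eq_comm] using this
    calc ∑ k ∈ s, ∑ l ∈ s, ∑ r, α k * u k r * ((starRingEnd ℂ) (α l) * (starRingEnd ℂ) (u l r))
        = ∑ k ∈ s, ∑ l ∈ s, α k * (starRingEnd ℂ) (α l) * ∑ r, u k r * (starRingEnd ℂ) (u l r) := by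
          refine Finset.sum_congr rfl fun k _ => Finset.sum_congr rfl fun l _ => ?_
          rw [Finset.mul_sum]
          exact Finset.sum_congr rfl fun r _ => by ring
      _ = ∑ k ∈ s, α k * (starRingEnd ℂ) (α k) := by
          simp_rw [inner2]
          simp
  exact_mod_cast key

private lemma frobSum' {N : ℕ} (u : Fin N → Fin N → ℂ)
    (horth : ∀ k l, ∑ i, (starRingEnd ℂ) (u k i) * u l i = if k = l then 1 else 0)
    (s : Finset (Fin N)) (lam : Fin N → ℝ) :
    ∑ i, ∑ j, ‖(∑ k ∈ s, (lam k : ℂ) • Matrix.vecMulVec (u k)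
        (fun i => (starRingEnd ℂ) (u k i))) i j‖ ^ 2 = ∑ k ∈ s, lam k ^ 2 := by
  have hM : ∀ i j, (∑ k ∈ s, (lam k : ℂ) • Matrix.vecMulVec (u k)
      (fun i => (starRingEnd ℂ) (u k i))) i j
      = ∑ k ∈ s, ((lam k : ℂ) * (starRingEnd ℂ) (u k j)) * u k i := by
    intro i j
    simp only [Matrix.sum_apply, Matrix.smul_apply, Matrix.vecMulVec_apply, smul_eq_mul]
    exact Finset.sum_congr rfl fun k _ => by ring
  rw [Finset.sum_comm]
  have hcol : ∀ j, ∑ i, ‖(∑ k ∈ s, (lam k : ℂ) • Matrix.vecMulVec (u k)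
      (fun i => (starRingEnd ℂ) (u k i))) i j‖ ^ 2
      = ∑ k ∈ s, (lam k)^2 * ‖u k j‖ ^ 2 := by
    intro j
    simp_rw [hM]
    rw [normSum' u horth s]
    refine Finset.sum_congr rfl fun k _ => ?_
    rw [norm_mul, RCLike.norm_conj, mul_pow]
    simp [sq_abs]
  simp_rw [hcol]
  rw [Finset.sum_comm]
  refine Finset.sum_congr rfl fun k _ => ?_
  rw [← Finset.mul_sum]
  have hn : ∑ j, ‖u k j‖ ^ 2 = 1 := by
    have h := horth k k
    simp only [if_pos rfl, if_true] at h
    have : ((∑ j, ‖u k j‖ ^ 2 : ℝ) : ℂ) = 1 := by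
      push_cast
      rw [← h]
      refine Finset.sum_congr rfl fun j _ => ?_
      rw [mul_comm, Complex.mul_conj]
      norm_cast
      rw [Complex.normSq_eq_norm_sq]
    exact_mod_cast this
  rw [hn, mul_one]

private lemma scalarLem' {N K : ℕ} (hK : K < N) (μ c : Fin N → ℝ)
    (hdec : ∀ i j : Fin N, i ≤ j → μ j ≤ μ i) (hμ : ∀ k, 0 ≤ μ k)
    (hc0 : ∀ k, 0 ≤ c k) (hc1 : ∀ k, c k ≤ 1)
    (hsum : ((N - K : ℕ) : ℝ) ≤ ∑ k, c k) :
    ∑ k ∈ univ.filter (fun k : Fin N => K ≤ (k : ℕ)), μ k ≤ ∑ k, μ k * c k := by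
  set κ : Fin N := ⟨K, hK⟩ with hκ
  have hA : univ.filter (fun k : Fin N => K ≤ (k : ℕ)) = Finset.Ici κ := by
    ext k
    simp [Fin.le_def, hκ]
  have hcardA : (univ.filter (fun k : Fin N => K ≤ (k : ℕ))).card = N - K := by
    rw [hA, Fin.card_Ici]
  have split : ∑ k, μ k * c k
      = ∑ k ∈ univ.filter (fun k : Fin N => K ≤ (k : ℕ)), μ k * c k
        + ∑ k ∈ univ.filter (fun k : Fin N => ¬ K ≤ (k : ℕ)), μ k * c k :=
    (Finset.sum_filter_add_sum_filter_not univ _ _).symm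
  have csplit : ∑ k, c k
      = ∑ k ∈ univ.filter (fun k : Fin N => K ≤ (k : ℕ)), c k
        + ∑ k ∈ univ.filter (fun k : Fin N => ¬ K ≤ (k : ℕ)), c k :=
    (Finset.sum_filter_add_sum_filter_not univ _ _).symm
  have h1 : ∀ k ∈ univ.filter (fun k : Fin N => K ≤ (k : ℕ)),
      μ k + μ κ * (c k - 1) ≤ μ k * c k := by
    intro k hk
    simp only [mem_filter, mem_univ, true_and] at hk
    have hμk : μ k ≤ μ κ := hdec κ k (by rw [Fin.le_def]; exact hk)
    nlinarith [hc1 k, hμ k]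
  have h2 : ∀ k ∈ univ.filter (fun k : Fin N => ¬ K ≤ (k : ℕ)),
      μ κ * c k ≤ μ k * c k := by
    intro k hk
    simp only [mem_filter, mem_univ, true_and, not_le] at hk
    have hμk : μ κ ≤ μ k := hdec k κ (by rw [Fin.le_def]; exact le_of_lt hk)
    exact mul_le_mul_of_nonneg_right hμk (hc0 k)
  have big : ∑ k ∈ univ.filter (fun k : Fin N => K ≤ (k : ℕ)), μ k
        + μ κ * ((∑ k, c k) - ((N - K : ℕ) : ℝ)) ≤ ∑ k, μ k * c k := by
    rw [split, csplit]
    have e1 : ∑ k ∈ univ.filter (fun k : Fin N => K ≤ (k : ℕ)), (μ k + μ κ * (c k - 1))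
        ≤ ∑ k ∈ univ.filter (fun k : Fin N => K ≤ (k : ℕ)), μ k * c k :=
      Finset.sum_le_sum h1
    have e2 : ∑ k ∈ univ.filter (fun k : Fin N => ¬ K ≤ (k : ℕ)), μ κ * c k
        ≤ ∑ k ∈ univ.filter (fun k : Fin N => ¬ K ≤ (k : ℕ)), μ k * c k :=
      Finset.sum_le_sum h2
    have expand : ∑ k ∈ univ.filter (fun k : Fin N => K ≤ (k : ℕ)), (μ k + μ κ * (c k - 1))
        = ∑ k ∈ univ.filter (fun k : Fin N => K ≤ (k : ℕ)), μ k
          + (μ κ * ((∑ k ∈ univ.filter (fun k : Fin N => K ≤ (k : ℕ)), c k)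
              - ((N - K : ℕ) : ℝ))) := by
      rw [Finset.sum_add_distrib, ← Finset.mul_sum]
      congr 1
      rw [Finset.sum_sub_distrib, Finset.sum_const, hcardA]
      ring_nf
    have expand2 : ∑ k ∈ univ.filter (fun k : Fin N => ¬ K ≤ (k : ℕ)), μ κ * c k
        = μ κ * ∑ k ∈ univ.filter (fun k : Fin N => ¬ K ≤ (k : ℕ)), c k := by
      rw [Finset.mul_sum]
    nlinarith [e1, e2, expand, expand2]
  have hnn : 0 ≤ μ κ * ((∑ k, c k) - ((N - K : ℕ) : ℝ)) :=
    mul_nonneg (hμ κ) (by linarith)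
  linarith

private lemma parseval' {N : ℕ} (b : OrthonormalBasis (Fin N) ℂ (EuclideanSpace ℂ (Fin N)))
    (x : EuclideanSpace ℂ (Fin N)) : ∑ k, ‖⟪b k, x⟫‖ ^ 2 = ‖x‖ ^ 2 := by
  have h := b.sum_inner_mul_inner x x
  have h2 : ∀ k : Fin N, ⟪x, b k⟫ * ⟪b k, x⟫ = ((‖⟪b k, x⟫‖ : ℂ)) ^ 2 := by
    intro k
    rw [← inner_conj_symm x (b k), Complex.conj_mul']
  simp_rw [h2] at h
  rw [inner_self_eq_norm_sq_to_K] at h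
  have h3 : ((∑ k, ‖⟪b k, x⟫‖ ^ 2 : ℝ) : ℂ) = (((‖x‖ ^ 2 : ℝ)) : ℂ) := by
    push_cast
    exact h
  exact_mod_cast h3

private lemma normsq_euclidean {N : ℕ} (x : EuclideanSpace ℂ (Fin N)) :
    ‖x‖ ^ 2 = ∑ i, ‖x i‖ ^ 2 := by
  rw [EuclideanSpace.norm_eq, Real.sq_sqrt]
  positivity


/-- Eckart–Young (Frobenius norm, Hermitian PSD case): for a Hermitian PSD matrix
`R = ∑ λ_k u_k u_kᴴ` with orthonormal `u_k` and decreasingly ordered eigenvalues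
`λ_k ≥ 0`, every Hermitian `R̂` of rank at most `K` satisfies
`‖R − R̂‖_F² ≥ ∑_{k ≥ K (0-based)} λ_k²`, with equality achieved by the spectral
truncation `R_K`. -/
theorem stmt14 {N : ℕ} (lam : Fin N → ℝ) (hpos : ∀ k, 0 ≤ lam k)
    (hdec : ∀ i j : Fin N, i ≤ j → lam j ≤ lam i)
    (u : Fin N → Fin N → ℂ)
    (horth : ∀ k l, ∑ i, (starRingEnd ℂ) (u k i) * u l i = if k = l then 1 else 0)
    (R : Matrix (Fin N) (Fin N) ℂ)
    (hR : R = ∑ k, (lam k : ℂ) • Matrix.vecMulVec (u k) (fun i => (starRingEnd ℂ) (u k i)))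
    (K : ℕ)
    (RK : Matrix (Fin N) (Fin N) ℂ)
    (hRK : RK = ∑ k ∈ Finset.univ.filter (fun k : Fin N => (k : ℕ) < K),
      (lam k : ℂ) • Matrix.vecMulVec (u k) (fun i => (starRingEnd ℂ) (u k i))) :
    (∀ Rhat : Matrix (Fin N) (Fin N) ℂ, Rhat.IsHermitian → Rhat.rank ≤ K →
        ∑ k ∈ Finset.univ.filter (fun k : Fin N => K ≤ (k : ℕ)), lam k ^ 2
          ≤ ∑ i, ∑ j, ‖(R - Rhat) i j‖ ^ 2)
    ∧ ∑ i, ∑ j, ‖(R - RK) i j‖ ^ 2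
        = ∑ k ∈ Finset.univ.filter (fun k : Fin N => K ≤ (k : ℕ)), lam k ^ 2 := by
  constructor
  · -- the inequality
    intro Rhat _ hrank
    by_cases hKN : N ≤ K
    · have hempty : Finset.univ.filter (fun k : Fin N => K ≤ (k : ℕ)) = ∅ := by
        refine Finset.filter_false_of_mem fun k _ => ?_
        exact Nat.not_le.mpr (lt_of_lt_of_le k.isLt hKN)
      rw [hempty, Finset.sum_empty]
      positivity
    push_neg at hKN
    -- Euclidean space setup
    let e := WithLp.equiv 2 (Fin N → ℂ)
    let u' : Fin N → EuclideanSpace ℂ (Fin N) := fun k => e.symm (u k)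
    have huo : Orthonormal ℂ u' := by
      rw [orthonormal_iff_ite]
      intro k l
      simpa [PiLp.inner_apply, RCLike.inner_apply, u', e, mul_comm] using horth k l
    obtain ⟨uB, huB⟩ := Orthonormal.exists_orthonormalBasis_extension_of_card_eq
      (𝕜 := ℂ) (v := u') (s := Set.univ)
      (by simp [finrank_euclideanSpace_fin])
      (huo.comp _ Subtype.val_injective)
    have huB' : ∀ k, uB k = u' k := fun k => huB k (Set.mem_univ k)
    -- kernel of Rhat
    set S := LinearMap.ker (Matrix.toEuclideanLin Rhat) with hS
    set m := finrank ℂ S with hm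
    have hmK : N - K ≤ m := by
      have h1 : Rhat.rank = finrank ℂ (LinearMap.range (Matrix.toEuclideanLin Rhat)) := by
        rw [Matrix.rank_eq_finrank_range_toLin Rhat (PiLp.basisFun 2 ℂ (Fin N))
          (PiLp.basisFun 2 ℂ (Fin N)), ← Matrix.toEuclideanLin_eq_toLin]
      have h2 := LinearMap.finrank_range_add_finrank_ker (Matrix.toEuclideanLin Rhat)
      rw [finrank_euclideanSpace_fin] at h2
      have h3 : m = finrank ℂ (LinearMap.ker (Matrix.toEuclideanLin Rhat)) := rfl
      omega
    let kb := stdOrthonormalBasis ℂ S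
    let v : Fin m → EuclideanSpace ℂ (Fin N) := fun i => ((kb i : S) : EuclideanSpace ℂ (Fin N))
    have hvo : Orthonormal ℂ v := by
      have h := kb.orthonormal
      rw [orthonormal_iff_ite] at h ⊢
      intro i j
      rw [← h i j]
      exact (Submodule.coe_inner (𝕜 := ℂ) S _ _)
    have hker : ∀ i, Rhat.mulVec (e (v i)) = 0 := by
      intro i
      have hx : Matrix.toEuclideanLin Rhat (v i) = 0 := LinearMap.mem_ker.mp (kb i).2
      have h2 := congrArg e hx
      exact h2
    -- coefficients
    set c : Fin N → ℝ := fun k => ∑ i, ‖⟪u' k, v i⟫‖ ^ 2 with hc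
    have hc0 : ∀ k, 0 ≤ c k := fun k => Finset.sum_nonneg fun i _ => by positivity
    have hc1 : ∀ k, c k ≤ 1 := by
      intro k
      have hb := hvo.sum_inner_products_le (s := Finset.univ) (u' k)
      have hflip : ∀ i, ‖⟪u' k, v i⟫‖ = ‖⟪v i, u' k⟫‖ := fun i => norm_inner_symm _ _
      have hnorm : ‖u' k‖ = 1 := huo.1 k
      calc c k = ∑ i, ‖⟪v i, u' k⟫‖ ^ 2 := by
            exact Finset.sum_congr rfl fun i _ => by rw [hflip]
        _ ≤ ‖u' k‖ ^ 2 := hb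
        _ = 1 := by rw [hnorm]; norm_num
    have hcm : ∑ k, c k = (m : ℝ) := by
      rw [hc]
      rw [Finset.sum_comm]
      have hone : ∀ i, ∑ k, ‖⟪u' k, v i⟫‖ ^ 2 = 1 := by
        intro i
        have hp := parseval' uB (v i)
        have : ∀ k, ‖⟪uB k, v i⟫‖ = ‖⟪u' k, v i⟫‖ := fun k => by rw [huB']
        rw [Finset.sum_congr rfl fun k _ => by rw [this k]] at hp
        rw [hp, hvo.1 i]
        norm_num
      rw [Finset.sum_congr rfl fun i _ => hone i]
      simp
    -- step 2 : column norms after applying kernel vectors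
    have step2 : ∀ i : Fin m, ∑ r, ‖(R - Rhat).mulVec (e (v i)) r‖ ^ 2
        = ∑ k, lam k ^ 2 * ‖⟪u' k, v i⟫‖ ^ 2 := by
      intro i
      have hsub : (R - Rhat).mulVec (e (v i)) = R.mulVec (e (v i)) := by
        rw [Matrix.sub_mulVec, hker i, sub_zero]
      rw [hsub]
      have hRw : ∀ r, R.mulVec (e (v i)) r
          = ∑ k, ((lam k : ℂ) * ⟪u' k, v i⟫) * u k r := by
        intro r
        have hip : ∀ k : Fin N, (⟪u' k, v i⟫ : ℂ) = ∑ j, (starRingEnd ℂ) (u k j) * (e (v i) j) := by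
          intro k
          simp only [PiLp.inner_apply, RCLike.inner_apply]
          exact Finset.sum_congr rfl fun j _ => mul_comm _ _
        rw [hR]
        simp only [Matrix.mulVec, dotProduct, Matrix.sum_apply, Matrix.smul_apply,
          Matrix.vecMulVec_apply, smul_eq_mul, Finset.sum_mul, Finset.mul_sum]
        rw [Finset.sum_comm]
        refine Finset.sum_congr rfl fun k _ => ?_
        rw [hip k, Finset.mul_sum, Finset.sum_mul]
        exact Finset.sum_congr rfl fun j _ => by ring
      rw [Finset.sum_congr rfl fun r _ => by rw [hRw r]]
      rw [show (Finset.univ : Finset (Fin N)) = Finset.univ from rfl]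
      rw [normSum' u horth Finset.univ (fun k => (lam k : ℂ) * ⟪u' k, v i⟫)]
      refine Finset.sum_congr rfl fun k _ => ?_
      rw [norm_mul, mul_pow, Complex.norm_real]
      simp [Real.norm_eq_abs, sq_abs]
    -- step 1 : Bessel bound
    have step1 : ∑ i : Fin m, ∑ r, ‖(R - Rhat).mulVec (e (v i)) r‖ ^ 2
        ≤ ∑ i, ∑ j, ‖(R - Rhat) i j‖ ^ 2 := by
      let y : Fin N → EuclideanSpace ℂ (Fin N) := fun r => e.symm (star ((R - Rhat) r))
      have hentry : ∀ (i : Fin m) (r : Fin N),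
          (R - Rhat).mulVec (e (v i)) r = ⟪y r, v i⟫ := by
        intro i r
        simp only [PiLp.inner_apply, RCLike.inner_apply, Matrix.mulVec, dotProduct, y]
        refine Finset.sum_congr rfl fun j _ => ?_
        show (R - Rhat) r j * v i j = v i j * (starRingEnd ℂ) (star ((R - Rhat) r j))
        rw [starRingEnd_apply, star_star, mul_comm]
      calc ∑ i : Fin m, ∑ r, ‖(R - Rhat).mulVec (e (v i)) r‖ ^ 2
          = ∑ r, ∑ i : Fin m, ‖⟪v i, y r⟫‖ ^ 2 := by
            rw [Finset.sum_comm]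
            exact Finset.sum_congr rfl fun r _ => Finset.sum_congr rfl fun i _ => by
              rw [hentry i r, norm_inner_symm]
        _ ≤ ∑ r, ‖y r‖ ^ 2 := by
            refine Finset.sum_le_sum fun r _ => ?_
            exact hvo.sum_inner_products_le (s := Finset.univ) (y r)
        _ = ∑ i, ∑ j, ‖(R - Rhat) i j‖ ^ 2 := by
            refine Finset.sum_congr rfl fun r _ => ?_
            rw [normsq_euclidean]
            refine Finset.sum_congr rfl fun j _ => ?_
            simp [y, e, ← map_sub, Complex.norm_conj]
    -- step 3
    have step3 : ∑ i : Fin m, ∑ k, lam k ^ 2 * ‖⟪u' k, v i⟫‖ ^ 2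
        = ∑ k, lam k ^ 2 * c k := by
      rw [Finset.sum_comm]
      exact Finset.sum_congr rfl fun k _ => by rw [hc, ← Finset.mul_sum]
    -- scalar bound
    have hsum : ((N - K : ℕ) : ℝ) ≤ ∑ k, c k := by
      rw [hcm]
      exact_mod_cast hmK
    have step4 := scalarLem' hKN (fun k => lam k ^ 2) c
      (fun i j hij => by
        have := hdec i j hij
        exact pow_le_pow_left₀ (hpos j) this 2)
      (fun k => by positivity) hc0 hc1 hsum
    calc ∑ k ∈ Finset.univ.filter (fun k : Fin N => K ≤ (k : ℕ)), lam k ^ 2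
        ≤ ∑ k, lam k ^ 2 * c k := step4
      _ = ∑ i : Fin m, ∑ k, lam k ^ 2 * ‖⟪u' k, v i⟫‖ ^ 2 := step3.symm
      _ = ∑ i : Fin m, ∑ r, ‖(R - Rhat).mulVec (e (v i)) r‖ ^ 2 := by
          exact Finset.sum_congr rfl fun i _ => (step2 i).symm
      _ ≤ ∑ i, ∑ j, ‖(R - Rhat) i j‖ ^ 2 := step1
  · -- equality for the truncation
    have hdiff : R - RK = ∑ k ∈ Finset.univ.filter (fun k : Fin N => K ≤ (k : ℕ)),
        (lam k : ℂ) • Matrix.vecMulVec (u k) (fun i => (starRingEnd ℂ) (u k i)) := by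
      rw [hR, hRK]
      rw [← Finset.sum_filter_add_sum_filter_not Finset.univ (fun k : Fin N => (k : ℕ) < K)]
      simp only [not_lt]
      abel
    rw [hdiff]
    exact frobSum' u horth _ lam
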